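/- There exists a constant M > 0 such that for every continuously differentiable, compactly supported u : ℝ² → ℝ² and every twice continuously differentiable, compactly supported C : ℝ² → ℝ, ‖u · ∇C‖_{L²} ≤ M ‖u‖_{L²}^{1/2} ‖∇u‖_{L²}^{1/2} ‖∇C‖_{L²}^{1/2} ‖D²C‖_{L²}^{1/2}, where (u · ∇C)(x) = u₁(x)∂₁C(x) + u₂(x)∂₂C(x) and ‖D²C‖_{L²}² = ∫_{ℝ²} Σ_{i,j} (∂ᵢ∂ⱼC)² dx. -/

import Mathlib

/-!
Pointwise Cauchy–Schwarz gives `|u · ∇C|² ≤ |u|² |∇C|²`, and Cauchy–Schwarz in `L²` bounds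
`∫ |u|² |∇C|²` by `‖u‖_{L⁴}² ‖∇C‖_{L⁴}²`. Both `L⁴` norms are controlled by Ladyzhenskaya's
inequality `‖v‖_{L⁴}⁴ ≤ K ‖v‖_{L²}² ‖∇v‖_{L²}²` in the plane, applied to `v = u` and `v = ∇C`.
Ladyzhenskaya's inequality is the Gagliardo–Nirenberg–Sobolev inequality `‖g‖_{L²} ≤ K ‖∇g‖_{L¹}`
(the case `n = 2` of Mathlib's `lintegral_pow_le_pow_lintegral_fderiv`) applied to `g = |v|²`,
whose gradient is bounded by `2 |v| |∇v|`, followed once more by Cauchy–Schwarz.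
-/

open MeasureTheory

/-- The `i`-th partial derivative of a scalar function on `ℝ²`. -/
noncomputable def pderiv2 (f : (Fin 2 → ℝ) → ℝ) (i : Fin 2) (x : Fin 2 → ℝ) : ℝ :=
  fderiv ℝ f x (Pi.single i 1)

open Module

theorem integral_mul_le_sqrt_mul_sqrt {α : Type*} [MeasurableSpace α] {μ : Measure α}
    {f g : α → ℝ} (hf : MemLp f 2 μ) (hg : MemLp g 2 μ) :
    ∫ x, f x * g x ∂μ ≤ √(∫ x, f x ^ 2 ∂μ) * √(∫ x, g x ^ 2 ∂μ) := by
  have holder := integral_mul_norm_le_Lp_mul_Lq (μ := μ) Real.HolderConjugate.two_two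
    (by simpa using hf) (by simpa using hg)
  simp only [Real.norm_eq_abs, Real.rpow_two, sq_abs, ← Real.sqrt_eq_rpow] at holder
  calc ∫ x, f x * g x ∂μ ≤ |∫ x, f x * g x ∂μ| := le_abs_self _
    _ ≤ ∫ x, |f x * g x| ∂μ := abs_integral_le_integral_abs
    _ = ∫ x, |f x| * |g x| ∂μ := by simp_rw [abs_mul]
    _ ≤ _ := holder

theorem norm_fderiv_norm_sq_le {G F : Type*} [NormedAddCommGroup G] [NormedSpace ℝ G]
    [NormedAddCommGroup F] [InnerProductSpace ℝ F] {u : G → F} {x : G}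
    (hu : DifferentiableAt ℝ u x) :
    ‖fderiv ℝ (fun y => ‖u y‖ ^ 2) x‖ ≤ 2 * ‖u x‖ * ‖fderiv ℝ u x‖ := by
  rw [hu.hasFDerivAt.norm_sq.fderiv, two_smul]
  calc _ ≤ 2 * ‖(innerSL ℝ (u x)).comp (fderiv ℝ u x)‖ :=
        (norm_add_le _ _).trans_eq (two_mul _).symm
    _ ≤ 2 * (‖innerSL ℝ (u x)‖ * ‖fderiv ℝ u x‖) := by
        gcongr; exact ContinuousLinearMap.opNorm_comp_le _ _
    _ = _ := by rw [innerSL_apply_norm, mul_assoc]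

theorem integral_norm_fderiv_norm_sq_le {E F : Type*} [NormedAddCommGroup E] [NormedSpace ℝ E]
    [MeasurableSpace E] [OpensMeasurableSpace E] {μ : Measure E} [IsFiniteMeasureOnCompacts μ]
    [NormedAddCommGroup F] [InnerProductSpace ℝ F] {u : E → F}
    (hu : ContDiff ℝ 1 u) (h2u : HasCompactSupport u) :
    ∫ x, ‖fderiv ℝ (fun y => ‖u y‖ ^ 2) x‖ ∂μ ≤
      2 * (√(∫ x, ‖u x‖ ^ 2 ∂μ) * √(∫ x, ‖fderiv ℝ u x‖ ^ 2 ∂μ)) := by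
  have hDu : Continuous (fderiv ℝ u) := hu.continuous_fderiv one_ne_zero
  have h2Du : HasCompactSupport (fderiv ℝ u) := h2u.fderiv (𝕜 := ℝ)
  have h2g : HasCompactSupport (fun x => ‖u x‖ ^ 2) := h2u.comp_left (g := (‖·‖ ^ 2)) (by simp)
  calc _ ≤ ∫ x, 2 * (‖u x‖ * ‖fderiv ℝ u x‖) ∂μ := by
        refine integral_mono ?_ ?_ fun x => ?_
        · exact ((hu.norm_sq ℝ).continuous_fderiv one_ne_zero).norm
            |>.integrable_of_hasCompactSupport (h2g.fderiv (𝕜 := ℝ)).norm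
        · exact (continuous_const.mul (hu.continuous.norm.mul hDu.norm))
            |>.integrable_of_hasCompactSupport h2u.norm.mul_right.mul_left
        · exact (norm_fderiv_norm_sq_le (hu.differentiable one_ne_zero x)).trans_eq
            (mul_assoc ..)
    _ = 2 * ∫ x, ‖u x‖ * ‖fderiv ℝ u x‖ ∂μ := integral_const_mul ..
    _ ≤ _ := by
        gcongr
        exact integral_mul_le_sqrt_mul_sqrt
          (hu.continuous.norm.memLp_of_hasCompactSupport h2u.norm)
          (hDu.norm.memLp_of_hasCompactSupport h2Du.norm)

section HaarMeasure

variable {E F : Type*} [NormedAddCommGroup E] [NormedSpace ℝ E] [MeasurableSpace E]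
  [BorelSpace E] [FiniteDimensional ℝ E] (μ : Measure E) [μ.IsAddHaarMeasure]

theorem integral_norm_sq_le_sq_integral_norm_fderiv [NormedAddCommGroup F] [NormedSpace ℝ F]
    (hE : finrank ℝ E = 2) {u : E → F} (hu : ContDiff ℝ 1 u) (h2u : HasCompactSupport u) :
    ∫ x, ‖u x‖ ^ 2 ∂μ ≤
      lintegralPowLePowLIntegralFDerivConst μ 2 * (∫ x, ‖fderiv ℝ u x‖ ∂μ) ^ 2 := by
  have hp : Real.HolderConjugate (finrank ℝ E) 2 := by rw [hE]; exact .two_two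
  have gns := lintegral_pow_le_pow_lintegral_fderiv μ hu h2u hp
  have hDu : Integrable (fderiv ℝ u) μ :=
    (hu.continuous_fderiv one_ne_zero).integrable_of_hasCompactSupport (h2u.fderiv (𝕜 := ℝ))
  have hu2 : ∫ x, ‖u x‖ ^ 2 ∂μ = ∫ x, ‖‖u x‖ ^ 2‖ ∂μ := by simp
  rw [hu2, integral_norm_eq_lintegral_enorm (f := fun x => ‖u x‖ ^ 2)
      (hu.continuous.norm.pow 2).aestronglyMeasurable,
    integral_norm_eq_lintegral_enorm hDu.aestronglyMeasurable, ← ENNReal.toReal_pow,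
    ← ENNReal.coe_toReal, ← ENNReal.toReal_mul]
  refine ENNReal.toReal_mono (ENNReal.mul_ne_top ENNReal.coe_ne_top
    (ENNReal.pow_ne_top hDu.hasFiniteIntegral.ne)) ?_
  simp_rw [ENNReal.rpow_two] at gns
  simpa only [enorm_pow, enorm_norm] using gns

theorem integral_norm_pow_four_le [NormedAddCommGroup F] [InnerProductSpace ℝ F]
    (hE : finrank ℝ E = 2) {u : E → F} (hu : ContDiff ℝ 1 u) (h2u : HasCompactSupport u) :
    ∫ x, ‖u x‖ ^ 4 ∂μ ≤ 4 * lintegralPowLePowLIntegralFDerivConst μ 2 *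
      (∫ x, ‖u x‖ ^ 2 ∂μ) * ∫ x, ‖fderiv ℝ u x‖ ^ 2 ∂μ := by
  calc ∫ x, ‖u x‖ ^ 4 ∂μ = ∫ x, ‖‖u x‖ ^ 2‖ ^ 2 ∂μ := by simp [← pow_mul]
    _ ≤ lintegralPowLePowLIntegralFDerivConst μ 2 *
          (∫ x, ‖fderiv ℝ (fun y => ‖u y‖ ^ 2) x‖ ∂μ) ^ 2 :=
        integral_norm_sq_le_sq_integral_norm_fderiv μ hE (hu.norm_sq ℝ)
          (h2u.comp_left (g := (‖·‖ ^ 2)) (by simp))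
    _ ≤ lintegralPowLePowLIntegralFDerivConst μ 2 *
          (2 * (√(∫ x, ‖u x‖ ^ 2 ∂μ) * √(∫ x, ‖fderiv ℝ u x‖ ^ 2 ∂μ))) ^ 2 := by
        gcongr
        exact integral_norm_fderiv_norm_sq_le hu h2u
    _ = _ := by
        rw [mul_pow, mul_pow, Real.sq_sqrt (integral_nonneg fun x => by positivity),
          Real.sq_sqrt (integral_nonneg fun x => by positivity)]
        ring

end HaarMeasure

/-- The factor `2` beyond `integral_norm_pow_four_le` is the price of the sup norm carried by
`Fin 2 → ℝ` (see `norm_toEuclidean_comp_sq_le`). -/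
noncomputable def ladyzhenskayaConst : ℝ :=
  8 * lintegralPowLePowLIntegralFDerivConst (volume : Measure (Fin 2 → ℝ)) 2

theorem ladyzhenskayaConst_nonneg : 0 ≤ ladyzhenskayaConst := by
  unfold ladyzhenskayaConst; positivity

theorem sq_apply_le_card_mul_norm_sq_mul_sum {ι κ : Type*} [Fintype κ] [DecidableEq κ]
    (L : (κ → ℝ) →L[ℝ] (ι → ℝ)) (v : κ → ℝ) (i : ι) :
    L v i ^ 2 ≤ Fintype.card κ * ‖v‖ ^ 2 * ∑ j, L (Pi.single j 1) i ^ 2 := by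
  have hv : L v i = ∑ j, v j * L (Pi.single j 1) i := by
    conv_lhs => rw [pi_eq_sum_univ' v]
    simp [Finset.sum_apply]
  calc L v i ^ 2 ≤ (∑ j, v j ^ 2) * ∑ j, L (Pi.single j 1) i ^ 2 :=
        hv ▸ Finset.sum_mul_sq_le_sq_mul_sq _ _ _
    _ ≤ (∑ _j : κ, ‖v‖ ^ 2) * ∑ j, L (Pi.single j 1) i ^ 2 := by
        refine mul_le_mul_of_nonneg_right (Finset.sum_le_sum fun j _ => ?_) (by positivity)
        simpa using pow_le_pow_left₀ (norm_nonneg _) (norm_le_pi_norm v j) 2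
    _ = _ := by simp

theorem norm_toEuclidean_comp_sq_le {ι κ : Type*} [Fintype ι] [Fintype κ] [DecidableEq κ]
    (L : (κ → ℝ) →L[ℝ] (ι → ℝ)) :
    ‖((EuclideanSpace.equiv ι ℝ).symm : (ι → ℝ) →L[ℝ] EuclideanSpace ℝ ι).comp L‖ ^ 2 ≤
      Fintype.card κ * ∑ i, ∑ j, L (Pi.single j 1) i ^ 2 := by
  set S := ∑ i, ∑ j, L (Pi.single j 1) i ^ 2
  suffices ‖((EuclideanSpace.equiv ι ℝ).symm : (ι → ℝ) →L[ℝ] EuclideanSpace ℝ ι).comp L‖ ≤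
      √(Fintype.card κ * S) from
    (pow_le_pow_left₀ (norm_nonneg _) this 2).trans_eq (Real.sq_sqrt (by positivity))
  refine ContinuousLinearMap.opNorm_le_bound _ (by positivity) fun v => ?_
  rw [← Real.sqrt_sq (norm_nonneg _), ← Real.sqrt_sq (norm_nonneg v),
    ← Real.sqrt_mul (by positivity)]
  refine Real.sqrt_le_sqrt ?_
  simp only [ContinuousLinearMap.comp_apply, EuclideanSpace.norm_sq_eq]
  calc ∑ i, ‖((EuclideanSpace.equiv ι ℝ).symm (L v)) i‖ ^ 2 = ∑ i, L v i ^ 2 := by simp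
    _ ≤ ∑ i, Fintype.card κ * ‖v‖ ^ 2 * ∑ j, L (Pi.single j 1) i ^ 2 :=
        Finset.sum_le_sum fun i _ => sq_apply_le_card_mul_norm_sq_mul_sum L v i
    _ = _ := by rw [← Finset.mul_sum]; ring

theorem memLp_sum_sq {X ι : Type*} [TopologicalSpace X] [MeasurableSpace X] [OpensMeasurableSpace X]
    [Fintype ι] {μ : Measure X} [IsFiniteMeasureOnCompacts μ] {u : X → ι → ℝ}
    (hu : Continuous u) (h2u : HasCompactSupport u) (p : ENNReal) :
    MemLp (fun x => ∑ i, u x i ^ 2) p μ := by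
  refine (by fun_prop : Continuous fun x => ∑ i, u x i ^ 2).memLp_of_hasCompactSupport ?_
  exact h2u.comp_left (g := fun v : ι → ℝ => ∑ i, v i ^ 2) (by simp)

theorem pderiv2_apply_eq_fderiv_apply {ι : Type*} {u : (Fin 2 → ℝ) → (ι → ℝ)}
    {x : Fin 2 → ℝ} (hu : DifferentiableAt ℝ u x) (i : ι) (j : Fin 2) :
    pderiv2 (fun y => u y i) j x = fderiv ℝ u x (Pi.single j 1) i := by
  rw [pderiv2, fderiv_apply hu]; rfl

theorem integrable_sum_sum_pderiv2_sq {ι : Type*} [Fintype ι] {u : (Fin 2 → ℝ) → (ι → ℝ)}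
    (hu : ContDiff ℝ 1 u) (h2u : HasCompactSupport u) :
    Integrable (fun x => ∑ i, ∑ j, pderiv2 (fun y => u y i) j x ^ 2) := by
  simp_rw [pderiv2_apply_eq_fderiv_apply (hu.differentiable one_ne_zero _)]
  have hDu : Continuous (fderiv ℝ u) := hu.continuous_fderiv one_ne_zero
  refine Continuous.integrable_of_hasCompactSupport (by fun_prop) ?_
  exact (h2u.fderiv (𝕜 := ℝ)).comp_left
    (g := fun L : (Fin 2 → ℝ) →L[ℝ] (ι → ℝ) => ∑ i, ∑ j, L (Pi.single j 1) i ^ 2) (by simp)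

theorem integral_sum_sq_sq_le {ι : Type*} [Fintype ι] {u : (Fin 2 → ℝ) → (ι → ℝ)}
    (hu : ContDiff ℝ 1 u) (h2u : HasCompactSupport u) :
    ∫ x, (∑ i, u x i ^ 2) ^ 2 ≤ ladyzhenskayaConst *
      (∫ x, ∑ i, u x i ^ 2) * ∫ x, ∑ i, ∑ j, pderiv2 (fun y => u y i) j x ^ 2 := by
  set e := (EuclideanSpace.equiv ι ℝ).symm
  set U := e ∘ u
  have hU : ContDiff ℝ 1 U := e.contDiff.comp hu
  have h2U : HasCompactSupport U := h2u.comp_left (map_zero e)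
  have hnorm : ∀ x, ‖U x‖ ^ 2 = ∑ i, u x i ^ 2 := fun x => by
    simp [U, e, EuclideanSpace.norm_sq_eq]
  have hDU : ∀ x, ‖fderiv ℝ U x‖ ^ 2 ≤ 2 * ∑ i, ∑ j, pderiv2 (fun y => u y i) j x ^ 2 :=
    fun x => by
      simp only [pderiv2_apply_eq_fderiv_apply (hu.differentiable one_ne_zero x)]
      rw [e.comp_fderiv]
      simpa only [Fintype.card_fin, Nat.cast_ofNat] using
        norm_toEuclidean_comp_sq_le (fderiv ℝ u x)
  calc ∫ x, (∑ i, u x i ^ 2) ^ 2 = ∫ x, ‖U x‖ ^ 4 := by simp_rw [← hnorm, ← pow_mul]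
    _ ≤ 4 * lintegralPowLePowLIntegralFDerivConst (volume : Measure (Fin 2 → ℝ)) 2 *
          (∫ x, ‖U x‖ ^ 2) * ∫ x, ‖fderiv ℝ U x‖ ^ 2 :=
        integral_norm_pow_four_le volume (by simp) hU h2U
    _ ≤ 4 * lintegralPowLePowLIntegralFDerivConst (volume : Measure (Fin 2 → ℝ)) 2 *
          (∫ x, ‖U x‖ ^ 2) * ∫ x, 2 * ∑ i, ∑ j, pderiv2 (fun y => u y i) j x ^ 2 := by
        refine mul_le_mul_of_nonneg_left (integral_mono ?_ ?_ hDU) (by positivity)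
        · exact ((hU.continuous_fderiv one_ne_zero).memLp_of_hasCompactSupport
            (h2U.fderiv (𝕜 := ℝ))).integrable_norm_pow two_ne_zero
        · exact (integrable_sum_sum_pderiv2_sq hu h2u).const_mul 2
    _ = _ := by simp_rw [hnorm, integral_const_mul, ladyzhenskayaConst]; ring

theorem integral_sq_sum_mul_le {ι : Type*} [Fintype ι] {u w : (Fin 2 → ℝ) → (ι → ℝ)}
    (hu : ContDiff ℝ 1 u) (h2u : HasCompactSupport u)
    (hw : ContDiff ℝ 1 w) (h2w : HasCompactSupport w) :
    ∫ x, (∑ i, u x i * w x i) ^ 2 ≤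
      √(ladyzhenskayaConst * (∫ x, ∑ i, u x i ^ 2) *
          ∫ x, ∑ i, ∑ j, pderiv2 (fun y => u y i) j x ^ 2) *
        √(ladyzhenskayaConst * (∫ x, ∑ i, w x i ^ 2) *
          ∫ x, ∑ i, ∑ j, pderiv2 (fun y => w y i) j x ^ 2) := by
  have hu2 := memLp_sum_sq (μ := volume) hu.continuous h2u 2
  have hw2 := memLp_sum_sq (μ := volume) hw.continuous h2w 2
  calc _ ≤ ∫ x, (∑ i, u x i ^ 2) * ∑ i, w x i ^ 2 :=
        integral_mono_of_nonneg (ae_of_all _ fun x => sq_nonneg _) (hu2.integrable_mul hw2)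
          (ae_of_all _ fun x => Finset.sum_mul_sq_le_sq_mul_sq _ _ _)
    _ ≤ √(∫ x, (∑ i, u x i ^ 2) ^ 2) * √(∫ x, (∑ i, w x i ^ 2) ^ 2) :=
        integral_mul_le_sqrt_mul_sqrt hu2 hw2
    _ ≤ _ := by
        gcongr
        · exact integral_sum_sq_sq_le hu h2u
        · exact integral_sum_sq_sq_le hw h2w

theorem ContDiff.pderiv2 {C : (Fin 2 → ℝ) → ℝ} (hC : ContDiff ℝ 2 C) :
    ContDiff ℝ 1 (fun x i => pderiv2 C i x) :=
  contDiff_pi.2 fun _ => (hC.fderiv_right (m := 1) (by norm_num)).clm_apply contDiff_const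

theorem HasCompactSupport.pderiv2 {C : (Fin 2 → ℝ) → ℝ} (hC : HasCompactSupport C) :
    HasCompactSupport (fun x i => pderiv2 C i x) :=
  (hC.fderiv (𝕜 := ℝ)).comp_left
    (g := fun L : (Fin 2 → ℝ) →L[ℝ] ℝ => fun i => L (Pi.single i 1)) (by funext i; simp)

theorem rpow_half_le_of_le_sqrt_mul_sqrt {X K A B R S : ℝ} (hK : 0 ≤ K) (hA : 0 ≤ A)
    (hB : 0 ≤ B) (hR : 0 ≤ R) (hS : 0 ≤ S) (h : X ≤ √(K * A * B) * √(K * R * S)) :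
    X ^ (1 / 2 : ℝ) ≤
      √K * A ^ (1 / 4 : ℝ) * B ^ (1 / 4 : ℝ) * R ^ (1 / 4 : ℝ) * S ^ (1 / 4 : ℝ) := by
  have quarter : ∀ {Y : ℝ}, 0 ≤ Y → (Y ^ (1 / 4 : ℝ)) ^ 2 = √Y := fun hY => by
    rw [← Real.rpow_natCast, ← Real.rpow_mul hY, Real.sqrt_eq_rpow]; norm_num
  rw [← Real.sqrt_eq_rpow]
  refine Real.sqrt_le_iff.2 ⟨by positivity, h.trans_eq ?_⟩
  rw [mul_pow, mul_pow, mul_pow, mul_pow, quarter hA, quarter hB, quarter hR, quarter hS,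
    Real.sq_sqrt hK, Real.sqrt_mul (by positivity), Real.sqrt_mul hK,
    Real.sqrt_mul (by positivity), Real.sqrt_mul hK]
  linear_combination (√A * √B * √R * √S) * Real.mul_self_sqrt hK

/-- Estimate of the convection term in `L²` (core of Lemma 4.3 of the paper):
`‖u · ∇C‖_{L²} ≤ M ‖u‖^{1/2} ‖∇u‖^{1/2} ‖∇C‖^{1/2} ‖D²C‖^{1/2}`. -/
theorem convection_term_L2_estimate :
    ∃ M : ℝ, 0 < M ∧
      ∀ (u : (Fin 2 → ℝ) → (Fin 2 → ℝ)) (C : (Fin 2 → ℝ) → ℝ),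
        ContDiff ℝ 1 u → HasCompactSupport u →
        ContDiff ℝ 2 C → HasCompactSupport C →
        (∫ x, (∑ i, u x i * pderiv2 C i x) ^ 2) ^ ((1 : ℝ) / 2) ≤
          M * (∫ x, ∑ i, (u x i) ^ 2) ^ ((1 : ℝ) / 4) *
            (∫ x, ∑ i, ∑ j, (pderiv2 (fun y => u y i) j x) ^ 2) ^ ((1 : ℝ) / 4) *
            (∫ x, ∑ i, (pderiv2 C i x) ^ 2) ^ ((1 : ℝ) / 4) *
            (∫ x, ∑ i, ∑ j, (pderiv2 (pderiv2 C j) i x) ^ 2) ^ ((1 : ℝ) / 4) := by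
  have hK := ladyzhenskayaConst_nonneg
  refine ⟨√ladyzhenskayaConst + 1, by positivity, fun u C hu h2u hC h2C => ?_⟩
  have hHess : ∫ x, ∑ i, ∑ j, pderiv2 (pderiv2 C j) i x ^ 2 =
      ∫ x, ∑ i, ∑ j, pderiv2 (fun y => pderiv2 C i y) j x ^ 2 := by
    congr 1; funext x; exact Finset.sum_comm
  calc _ ≤ √ladyzhenskayaConst * (∫ x, ∑ i, (u x i) ^ 2) ^ ((1 : ℝ) / 4) *
            (∫ x, ∑ i, ∑ j, (pderiv2 (fun y => u y i) j x) ^ 2) ^ ((1 : ℝ) / 4) *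
            (∫ x, ∑ i, (pderiv2 C i x) ^ 2) ^ ((1 : ℝ) / 4) *
            (∫ x, ∑ i, ∑ j, (pderiv2 (pderiv2 C j) i x) ^ 2) ^ ((1 : ℝ) / 4) := by
        refine rpow_half_le_of_le_sqrt_mul_sqrt hK (by positivity) (by positivity)
          (by positivity) (by positivity) ?_
        rw [hHess]
        exact integral_sq_sum_mul_le hu h2u hC.pderiv2 h2C.pderiv2
    _ ≤ _ := by gcongr; linarith
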